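/- For every graph G with maximum degree Δ ≥ 1, the complete bipartite graph K_{Δ,Δ} satisfies χ'_ss(K_{Δ,Δ}) = Δ², and every graph G with maximum degree Δ satisfies χ'_ss(G) ≤ Δ². -/

import Mathlib

/-!
Lower bound: any two edges of `K_{Δ,Δ}` are adjacent or lie on a common 4-cycle, so every end
of one is adjacent to the other; a semistrong matching of `K_{Δ,Δ}` therefore has at most one
edge, and each of the `Δ²` edges needs a colour of its own.

Upper bound: among the proper edge colourings with `Δ²` colours (they exist greedily, as
`2Δ - 1 ≤ Δ²`) take one minimising the weight `Σᵢ |E(G[V(Mᵢ)])|`. Suppose an edge `uv` of a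
class `Mᵢ` is pendant at neither end, and put `t_j = |N(u) ∩ V(M_j)| + |N(v) ∩ V(M_j)|`, so
`t_i ≥ 4`. Moving `uv` into a class `M_j` that misses `u` and `v` changes the weight by
`t_j + 2 - t_i`, so minimality gives `t_j ≥ 2`; a class covering `u` or `v` has `t_j ≥ 2` anyway.
Hence `Σ_j t_j ≥ 2Δ² + 2`, whereas a vertex is covered by at most `Δ` classes, so
`Σ_j t_j ≤ (deg u + deg v) Δ ≤ 2Δ²`.
-/

namespace SSE

open SimpleGraph

variable {V : Type*} {W : Type*}

/-- The set of vertices covered by a set of edges. -/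
def cov (M : Set (Sym2 V)) : Set V := {v | ∃ e ∈ M, v ∈ e}

/-- `M` is a matching of `G`: a set of pairwise disjoint edges of `G`. -/
def IsMatchingSet (G : SimpleGraph V) (M : Set (Sym2 V)) : Prop :=
  M ⊆ G.edgeSet ∧ ∀ e ∈ M, ∀ f ∈ M, e ≠ f → ∀ v : V, v ∈ e → v ∉ f

/-- `v` is a pendant vertex (degree 1) of the subgraph `G_M` of `G` induced by
the vertices covered by `M`. -/
def PendantIn (G : SimpleGraph V) (M : Set (Sym2 V)) (v : V) : Prop :=
  v ∈ cov M ∧ ∃! u, u ∈ cov M ∧ G.Adj v u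

/-- `M` is an induced (strong) matching of `G`: every vertex of `G_M` is pendant in `G_M`. -/
def IsInducedMatching (G : SimpleGraph V) (M : Set (Sym2 V)) : Prop :=
  IsMatchingSet G M ∧ ∀ v ∈ cov M, PendantIn G M v

/-- `M` is a semistrong matching of `G`: every edge of `M` is a pendant edge of `G_M`. -/
def IsSemistrongMatching (G : SimpleGraph V) (M : Set (Sym2 V)) : Prop :=
  IsMatchingSet G M ∧ ∀ e ∈ M, ∃ v, v ∈ e ∧ PendantIn G M v

/-- `N` is a perfect matching of the subgraph of `G` induced by `S`. -/
def IsPerfectMatchingOn (G : SimpleGraph V) (S : Set V) (N : Set (Sym2 V)) : Prop :=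
  IsMatchingSet G N ∧ (∀ e ∈ N, ∀ v : V, v ∈ e → v ∈ S) ∧ cov N = S

/-- `M` is a uniquely restricted matching of `G`: it is the unique perfect matching
of the subgraph induced by the vertices it covers. -/
def IsUniquelyRestrictedMatching (G : SimpleGraph V) (M : Set (Sym2 V)) : Prop :=
  IsMatchingSet G M ∧ ∀ N : Set (Sym2 V), IsPerfectMatchingOn G (cov M) N → N = M

/-- An edge coloring of `G` with colors `< k` each of whose color classes satisfies `P`. -/
def IsPColoring (G : SimpleGraph V) (P : SimpleGraph V → Set (Sym2 V) → Prop)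
    (c : Sym2 V → ℕ) (k : ℕ) : Prop :=
  (∀ e ∈ G.edgeSet, c e < k) ∧ ∀ i : ℕ, P G {e | e ∈ G.edgeSet ∧ c e = i}

/-- The least number of colors in an edge coloring of `G` whose color classes satisfy `P`. -/
noncomputable def pIndex (G : SimpleGraph V)
    (P : SimpleGraph V → Set (Sym2 V) → Prop) : ℕ :=
  sInf {k | ∃ c, IsPColoring G P c k}

/-- The chromatic index. -/
noncomputable def chromIndex (G : SimpleGraph V) : ℕ := pIndex G IsMatchingSet

/-- The uniquely restricted chromatic index. -/
noncomputable def urIndex (G : SimpleGraph V) : ℕ := pIndex G IsUniquelyRestrictedMatching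

/-- The semistrong chromatic index. -/
noncomputable def ssIndex (G : SimpleGraph V) : ℕ := pIndex G IsSemistrongMatching

/-- The strong chromatic index. -/
noncomputable def strongIndex (G : SimpleGraph V) : ℕ := pIndex G IsInducedMatching

/-- The degree of a vertex. -/
noncomputable def natDeg (G : SimpleGraph V) (v : V) : ℕ := (G.neighborSet v).ncard

/-- The maximum average degree of `G` is (strictly) less than `q`:
every nonempty (induced) subgraph has average degree `< q`. -/
def MadLT (G : SimpleGraph V) (q : ℚ) : Prop :=
  ∀ s : Set V, s.Finite → s.Nonempty →
    (2 * ({e ∈ G.edgeSet | ∀ v ∈ e, v ∈ s}.ncard : ℚ)) < q * s.ncard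

/-- `K` is a minor of `G` (branch-set formulation). -/
def HasMinor (G : SimpleGraph V) (K : SimpleGraph W) : Prop :=
  ∃ B : W → Set V, (∀ w, (B w).Nonempty) ∧
    (∀ w, (G.induce (B w)).Connected) ∧
    (Pairwise fun w w' => Disjoint (B w) (B w')) ∧
    (∀ w w', K.Adj w w' → ∃ u ∈ B w, ∃ v ∈ B w', G.Adj u v)

/-- `G` is planar (by Wagner's theorem: no `K₅` minor and no `K₃,₃` minor). -/
def IsPlanar (G : SimpleGraph V) : Prop :=
  ¬ HasMinor G (completeGraph (Fin 5)) ∧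
  ¬ HasMinor G (completeBipartiteGraph (Fin 3) (Fin 3))

/-- The join `C_Δ ∨ I_2` of a cycle on `Δ` vertices with an independent set of 2 vertices. -/
def joinCI (n : ℕ) : SimpleGraph (Fin n ⊕ Fin 2) :=
  SimpleGraph.fromRel (fun x y =>
    match x, y with
    | Sum.inl a, Sum.inl b => (SimpleGraph.cycleGraph n).Adj a b
    | Sum.inl _, Sum.inr _ => True
    | _, _ => False)

/-- `G` contains an `M`-alternating cycle: a cycle whose edges alternate between
edges in `M` and edges not in `M` (cyclically). -/
def HasAlternatingCycle (G : SimpleGraph V) (M : Set (Sym2 V)) : Prop :=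
  ∃ (v : V) (c : G.Walk v v), c.IsCycle ∧
    List.Chain' (fun e f => ¬(e ∈ M ↔ f ∈ M)) c.edges ∧
    ∀ e ∈ c.edges.head?, ∀ f ∈ c.edges.getLast?, ¬(e ∈ M ↔ f ∈ M)

/-- Edges `e` and `f` lie together on a cycle of length 4 in `G`. -/
def OnCommonC4 (G : SimpleGraph V) (e f : Sym2 V) : Prop :=
  ∃ (v : V) (c : G.Walk v v), c.IsCycle ∧ c.length = 4 ∧ e ∈ c.edges ∧ f ∈ c.edges

section Cover

variable {G : SimpleGraph V} {M M' : Set (Sym2 V)} {u v x y : V}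

lemma cov_insert (u v : V) (M : Set (Sym2 V)) :
    cov (insert s(u, v) M) = insert u (insert v (cov M)) := by
  ext x
  simp only [cov, Set.mem_ofPred_eq, Set.mem_insert_iff, exists_eq_or_imp, Sym2.mem_iff, or_assoc]

lemma cov_eq_insert_insert_cov_diff (hM : s(u, v) ∈ M) :
    cov M = insert u (insert v (cov (M \ {s(u, v)}))) := by
  rw [← cov_insert, Set.insert_sdiff_singleton, Set.insert_eq_of_mem hM]

lemma exists_adj_mem_cov (hM : M ⊆ G.edgeSet) (hx : x ∈ cov M) :
    ∃ y, G.Adj x y ∧ y ∈ cov M := by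
  obtain ⟨e, he, hxe⟩ := hx
  obtain ⟨y, rfl⟩ := Sym2.mem_iff_exists.1 hxe
  exact ⟨y, hM he, _, he, Sym2.mem_mk_right x y⟩

lemma IsMatchingSet.mono (hM : IsMatchingSet G M) (h : M' ⊆ M) : IsMatchingSet G M' :=
  ⟨h.trans hM.1, fun e he f hf => hM.2 e (h he) f (h hf)⟩

lemma IsMatchingSet.insert (hM : IsMatchingSet G M) (huv : G.Adj u v)
    (hu : u ∉ cov M) (hv : v ∉ cov M) : IsMatchingSet G (insert s(u, v) M) := by
  have hfresh : ∀ f ∈ M, ∀ x ∈ s(u, v), x ∉ f := by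
    rintro f hf x hx hxf
    rcases Sym2.mem_iff.1 hx with rfl | rfl
    exacts [hu ⟨f, hf, hxf⟩, hv ⟨f, hf, hxf⟩]
  refine ⟨Set.insert_subset huv hM.1, ?_⟩
  rintro e (rfl | he) f (rfl | hf) hef x hxe hxf
  · exact hef rfl
  · exact hfresh f hf x hxe hxf
  · exact hfresh e he x hxf hxe
  · exact hM.2 e he f hf hef x hxe hxf

lemma IsMatchingSet.notMem_cov_diff (hM : IsMatchingSet G M) {e : Sym2 V} (he : e ∈ M)
    (hx : x ∈ e) : x ∉ cov (M \ {e}) := by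
  rintro ⟨f, ⟨hf, hfe⟩, hxf⟩
  exact hM.2 f hf e he hfe x hxf hx

lemma two_le_ncard_neighborSet_inter_cov [Finite V] (hxy : G.Adj x y) (hy : y ∈ cov M)
    (hx : x ∈ cov M) (hnp : ¬PendantIn G M x) : 2 ≤ (G.neighborSet x ∩ cov M).ncard := by
  have hnu : ¬∃! z, z ∈ cov M ∧ G.Adj x z := fun h => hnp ⟨hx, h⟩
  obtain ⟨z, ⟨hz, hxz⟩, hzy⟩ : ∃ z, (z ∈ cov M ∧ G.Adj x z) ∧ z ≠ y := by
    by_contra! h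
    exact hnu ⟨y, ⟨hy, hxy⟩, fun z hz => h z hz⟩
  exact (Set.one_lt_ncard_iff).2 ⟨z, y, ⟨hxz, hz⟩, ⟨hxy, hy⟩, hzy⟩

end Cover

section InducedEdges

variable (G : SimpleGraph V)

def inducedEdges (S : Set V) : Set (Sym2 V) := {e | e ∈ G.edgeSet ∧ ∀ x ∈ e, x ∈ S}

noncomputable def edgeDegreeIn (u v : V) (S : Set V) : ℕ :=
  (G.neighborSet u ∩ S).ncard + (G.neighborSet v ∩ S).ncard

variable {G} {S : Set V} {u v : V}

lemma edgeDegreeIn_comm (u v : V) (S : Set V) : edgeDegreeIn G u v S = edgeDegreeIn G v u S :=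
  Nat.add_comm _ _

lemma inducedEdges_insert (u : V) (S : Set V) :
    inducedEdges G (insert u S) =
      inducedEdges G S ∪ (fun w => s(u, w)) '' (G.neighborSet u ∩ S) := by
  ext e
  induction e with
  | h x y =>
    simp only [inducedEdges, Set.mem_union, Set.mem_image, Set.mem_inter_iff, mem_neighborSet,
      Set.mem_ofPred_eq, mem_edgeSet, Sym2.mem_iff, forall_eq_or_imp, forall_eq,
      Set.mem_insert_iff, Sym2.eq_iff]
    constructor
    · rintro ⟨hxy, hx | hx, hy | hy⟩
      · exact absurd (hx.trans hy.symm) hxy.ne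
      · exact Or.inr ⟨y, ⟨hx ▸ hxy, hy⟩, Or.inl ⟨hx.symm, rfl⟩⟩
      · exact Or.inr ⟨x, ⟨hy ▸ hxy.symm, hx⟩, Or.inr ⟨hy.symm, rfl⟩⟩
      · exact Or.inl ⟨hxy, hx, hy⟩
    · rintro (⟨hxy, hx, hy⟩ | ⟨w, ⟨huw, hw⟩, ⟨rfl, rfl⟩ | ⟨rfl, rfl⟩⟩)
      · exact ⟨hxy, Or.inr hx, Or.inr hy⟩
      · exact ⟨huw, Or.inl rfl, Or.inr hw⟩
      · exact ⟨huw.symm, Or.inr hw, Or.inl rfl⟩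

variable [Finite V]

lemma ncard_inducedEdges_insert (hu : u ∉ S) :
    (inducedEdges G (insert u S)).ncard =
      (inducedEdges G S).ncard + (G.neighborSet u ∩ S).ncard := by
  have hdisj : Disjoint (inducedEdges G S) ((fun w => s(u, w)) '' (G.neighborSet u ∩ S)) := by
    rw [Set.disjoint_left]
    rintro _ ⟨-, hS⟩ ⟨w, -, rfl⟩
    exact hu (hS u (Sym2.mem_mk_left u w))
  rw [inducedEdges_insert, Set.ncard_union_eq hdisj,
    Set.ncard_image_of_injective _ (fun _ _ => Sym2.congr_right.1)]

lemma edgeDegreeIn_insert_insert (huv : G.Adj u v) (hu : u ∉ S) (hv : v ∉ S) :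
    edgeDegreeIn G u v (insert u (insert v S)) = edgeDegreeIn G u v S + 2 := by
  rw [edgeDegreeIn, edgeDegreeIn,
    Set.inter_insert_of_notMem (G.notMem_neighborSet_self (a := u)),
    Set.inter_insert_of_mem (show v ∈ G.neighborSet u from huv),
    Set.ncard_insert_of_notMem (fun h => hv h.2),
    Set.inter_insert_of_mem (show u ∈ G.neighborSet v from huv.symm),
    Set.inter_insert_of_notMem (G.notMem_neighborSet_self (a := v)),
    Set.ncard_insert_of_notMem (fun h => hu h.2)]
  omega

lemma ncard_inducedEdges_insert_insert (huv : G.Adj u v) (hu : u ∉ S) (hv : v ∉ S) :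
    (inducedEdges G (insert u (insert v S))).ncard + 1 =
      (inducedEdges G S).ncard + edgeDegreeIn G u v (insert u (insert v S)) := by
  have huS : u ∉ insert v S := by simp [huv.ne, hu]
  rw [ncard_inducedEdges_insert huS, ncard_inducedEdges_insert hv,
    edgeDegreeIn_insert_insert huv hu hv, edgeDegreeIn,
    Set.inter_insert_of_mem (show v ∈ G.neighborSet u from huv),
    Set.ncard_insert_of_notMem (fun h => hv h.2)]
  omega

lemma two_le_edgeDegreeIn_of_mem_cov {M : Set (Sym2 V)} (hM : M ⊆ G.edgeSet) (huv : G.Adj u v)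
    (hu : u ∈ cov M) : 2 ≤ edgeDegreeIn G u v (cov M) := by
  obtain ⟨z, huz, hz⟩ := exists_adj_mem_cov hM hu
  have hNu : 0 < (G.neighborSet u ∩ cov M).ncard := (Set.ncard_pos).2 ⟨z, huz, hz⟩
  have hNv : 0 < (G.neighborSet v ∩ cov M).ncard := (Set.ncard_pos).2 ⟨u, huv.symm, hu⟩
  rw [edgeDegreeIn]
  omega

lemma four_le_edgeDegreeIn_of_not_pendantIn {M : Set (Sym2 V)} (huv : G.Adj u v)
    (he : s(u, v) ∈ M) (hu : ¬PendantIn G M u) (hv : ¬PendantIn G M v) :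
    4 ≤ edgeDegreeIn G u v (cov M) := by
  have huM : u ∈ cov M := ⟨_, he, Sym2.mem_mk_left u v⟩
  have hvM : v ∈ cov M := ⟨_, he, Sym2.mem_mk_right u v⟩
  have := two_le_ncard_neighborSet_inter_cov huv hvM huM hu
  have := two_le_ncard_neighborSet_inter_cov huv.symm huM hvM hv
  rw [edgeDegreeIn]
  omega

end InducedEdges

lemma sum_add_add_eq_of_eq_off_pair {ι R : Type*} [DecidableEq ι] [AddCommMonoid R]
    {s : Finset ι} {f g : ι → R} {i j : ι} (hi : i ∈ s) (hj : j ∈ s) (hij : i ≠ j)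
    (hfg : ∀ k ∈ s, k ≠ i → k ≠ j → f k = g k) :
    ∑ k ∈ s, f k + (g i + g j) = ∑ k ∈ s, g k + (f i + f j) := by
  have hj' : j ∈ s.erase i := Finset.mem_erase.2 ⟨hij.symm, hj⟩
  rw [← Finset.add_sum_erase s f hi, ← Finset.add_sum_erase _ f hj',
    ← Finset.add_sum_erase s g hi, ← Finset.add_sum_erase _ g hj',
    Finset.sum_congr rfl fun k hk => hfg k (Finset.mem_erase.1 (Finset.mem_erase.1 hk).2).2
      (Finset.mem_erase.1 (Finset.mem_erase.1 hk).2).1 (Finset.mem_erase.1 hk).1]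
  abel

section Coloring

open Function

variable (G : SimpleGraph V)

def colorClass (c : Sym2 V → ℕ) (i : ℕ) : Set (Sym2 V) := {e | e ∈ G.edgeSet ∧ c e = i}

noncomputable def inducedWeight (K : ℕ) (c : Sym2 V → ℕ) : ℕ :=
  ∑ i ∈ Finset.range K, (inducedEdges G (cov (colorClass G c i))).ncard

variable {G} [DecidableEq V] {c : Sym2 V → ℕ} {e : Sym2 V} {i j : ℕ}

lemma colorClass_update_of_ne (hi : i ≠ c e) (hj : i ≠ j) :
    colorClass G (update c e j) i = colorClass G c i := by
  ext f
  by_cases hf : f = e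
  · subst hf; simp [colorClass, Ne.symm hi, Ne.symm hj]
  · simp [colorClass, update_of_ne hf]

lemma colorClass_update_source (hj : j ≠ c e) :
    colorClass G (update c e j) (c e) = colorClass G c (c e) \ {e} := by
  ext f
  by_cases hf : f = e
  · subst hf; simp [colorClass, hj]
  · simp [colorClass, hf]

lemma colorClass_update_target (he : e ∈ G.edgeSet) :
    colorClass G (update c e j) j = insert e (colorClass G c j) := by
  ext f
  by_cases hf : f = e
  · subst hf; simp [colorClass, he]
  · simp [colorClass, hf]

end Coloring

section Recoloring

open Function

variable {G : SimpleGraph V} {c : Sym2 V → ℕ} {K j : ℕ} {u v : V}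

lemma ne_of_notMem_cov_colorClass (huv : G.Adj u v) (hu : u ∉ cov (colorClass G c j)) :
    j ≠ c s(u, v) := by
  rintro rfl
  exact hu ⟨s(u, v), ⟨huv, rfl⟩, Sym2.mem_mk_left u v⟩

lemma IsPColoring.update_of_notMem_cov [DecidableEq V] (hc : IsPColoring G IsMatchingSet c K)
    (huv : G.Adj u v) (hj : j < K) (hu : u ∉ cov (colorClass G c j))
    (hv : v ∉ cov (colorClass G c j)) :
    IsPColoring G IsMatchingSet (update c s(u, v) j) K := by
  have hji := ne_of_notMem_cov_colorClass huv hu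
  refine ⟨fun f hf => ?_, fun k => ?_⟩
  · by_cases hfe : f = s(u, v)
    · rw [hfe, update_self]; exact hj
    · rw [update_of_ne hfe]; exact hc.1 f hf
  change IsMatchingSet G (colorClass G _ k)
  by_cases hki : k = c s(u, v)
  · rw [hki, colorClass_update_source hji]
    exact (hc.2 _).mono Set.sdiff_subset
  by_cases hkj : k = j
  · rw [hkj, colorClass_update_target (show s(u, v) ∈ G.edgeSet from huv)]
    exact (hc.2 j).insert huv hu hv
  · rw [colorClass_update_of_ne hki hkj]
    exact hc.2 k

lemma inducedWeight_update [DecidableEq V] [Finite V] (hc : IsPColoring G IsMatchingSet c K)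
    (huv : G.Adj u v) (hj : j < K) (hu : u ∉ cov (colorClass G c j))
    (hv : v ∉ cov (colorClass G c j)) :
    inducedWeight G K (update c s(u, v) j) + edgeDegreeIn G u v (cov (colorClass G c (c s(u, v))))
      = inducedWeight G K c + edgeDegreeIn G u v (cov (colorClass G c j)) + 2 := by
  have hji : j ≠ c s(u, v) := ne_of_notMem_cov_colorClass huv hu
  have hiK : c s(u, v) < K := hc.1 _ huv
  have hweight := sum_add_add_eq_of_eq_off_pair
    (f := fun k => (inducedEdges G (cov (colorClass G (update c s(u, v) j) k))).ncard)
    (g := fun k => (inducedEdges G (cov (colorClass G c k))).ncard)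
    (Finset.mem_range.2 hiK) (Finset.mem_range.2 hj) hji.symm
    (fun k _ hki hkj => by simp only [colorClass_update_of_ne hki hkj])
  have he : s(u, v) ∈ colorClass G c (c s(u, v)) := ⟨huv, rfl⟩
  have hM : IsMatchingSet G (colorClass G c (c s(u, v))) := hc.2 _
  have hsource := ncard_inducedEdges_insert_insert huv
    (hM.notMem_cov_diff he (Sym2.mem_mk_left u v)) (hM.notMem_cov_diff he (Sym2.mem_mk_right u v))
  have htarget := ncard_inducedEdges_insert_insert huv hu hv
  rw [← cov_eq_insert_insert_cov_diff he] at hsource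
  rw [edgeDegreeIn_insert_insert huv hu hv, ← cov_insert] at htarget
  simp only [colorClass_update_source hji,
    colorClass_update_target (show s(u, v) ∈ G.edgeSet from huv)] at hweight
  rw [inducedWeight, inducedWeight]
  omega

end Recoloring

section Degrees

variable {G : SimpleGraph V} {Δ : ℕ}

lemma natDeg_eq_degree (v : V) [Fintype (G.neighborSet v)] : natDeg G v = G.degree v := by
  rw [natDeg, ← Nat.card_coe_set_eq, Nat.card_eq_fintype_card, card_neighborSet_eq_degree]

variable [Fintype V]

open Classical in
lemma card_filter_mem_cov_colorClass_le (c : Sym2 V → ℕ) (K : ℕ) (w : V) :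
    ((Finset.range K).filter fun j => w ∈ cov (colorClass G c j)).card ≤ natDeg G w := by
  rw [natDeg_eq_degree, ← card_incidenceFinset_eq_degree]
  refine (Finset.card_le_card fun j hj => ?_).trans
    (Finset.card_image_le (s := G.incidenceFinset w) (f := c))
  obtain ⟨e, ⟨he, rfl⟩, hwe⟩ := (Finset.mem_filter.1 hj).2
  exact Finset.mem_image_of_mem c ((G.mem_incidenceFinset w e).2 ⟨he, hwe⟩)

lemma sum_ncard_inter_cov_colorClass_le (hdeg : ∀ v, natDeg G v ≤ Δ) (c : Sym2 V → ℕ)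
    (K : ℕ) (T : Set V) :
    ∑ j ∈ Finset.range K, (T ∩ cov (colorClass G c j)).ncard ≤ T.ncard * Δ := by
  classical
  calc ∑ j ∈ Finset.range K, (T ∩ cov (colorClass G c j)).ncard
      = ∑ j ∈ Finset.range K,
          (T.toFinset.bipartiteAbove (fun j w => w ∈ cov (colorClass G c j)) j).card := by
        refine Finset.sum_congr rfl fun j _ => ?_
        rw [Set.ncard_eq_toFinset_card']
        congr 1
        ext w
        simp [Finset.bipartiteAbove]
    _ = ∑ w ∈ T.toFinset,
          ((Finset.range K).bipartiteBelow (fun j w => w ∈ cov (colorClass G c j)) w).card :=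
        Finset.sum_card_bipartiteAbove_eq_sum_card_bipartiteBelow _
    _ ≤ T.toFinset.card * Δ :=
        Finset.sum_le_card_nsmul _ _ _ fun w _ =>
          (card_filter_mem_cov_colorClass_le c K w).trans (hdeg w)
    _ = T.ncard * Δ := by rw [Set.ncard_eq_toFinset_card']

lemma sum_edgeDegreeIn_cov_colorClass_le (hdeg : ∀ v, natDeg G v ≤ Δ) (c : Sym2 V → ℕ)
    (K : ℕ) (u v : V) :
    ∑ j ∈ Finset.range K, edgeDegreeIn G u v (cov (colorClass G c j)) ≤ 2 * Δ ^ 2 := by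
  have hu := sum_ncard_inter_cov_colorClass_le hdeg c K (G.neighborSet u)
  have hv := sum_ncard_inter_cov_colorClass_le hdeg c K (G.neighborSet v)
  have hu' := Nat.mul_le_mul_right Δ (hdeg u)
  have hv' := Nat.mul_le_mul_right Δ (hdeg v)
  rw [natDeg] at hu' hv'
  simp only [edgeDegreeIn, Finset.sum_add_distrib]
  nlinarith

end Degrees

section Greedy

open Function

variable {G : SimpleGraph V} [Fintype V] {Δ K : ℕ}

/-- At most `2(Δ - 1)` other edges meet `uv`, so `2Δ ≤ K + 1` colours leave one free for it. -/
lemma exists_lt_forall_ne_of_adj (hdeg : ∀ v, natDeg G v ≤ Δ) (hK : 2 * Δ ≤ K + 1)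
    {F : Finset (Sym2 V)} (hF : ↑F ⊆ G.edgeSet) {u v : V} (huv : G.Adj u v)
    (huvF : s(u, v) ∉ F) (c : Sym2 V → ℕ) :
    ∃ k < K, ∀ f ∈ F, ∀ x ∈ s(u, v), x ∈ f → c f ≠ k := by
  classical
  have hcard (x : V) (hx : x ∈ s(u, v)) :
      ((G.incidenceFinset x).erase s(u, v)).card + 1 ≤ Δ := by
    rw [Finset.card_erase_add_one ((G.mem_incidenceFinset x _).2 ⟨huv, hx⟩),
      card_incidenceFinset_eq_degree, ← natDeg_eq_degree]
    exact hdeg x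
  set B := ((G.incidenceFinset u).erase s(u, v) ∪ (G.incidenceFinset v).erase s(u, v)).image c
  have hB : B.card < (Finset.range K).card := by
    have : B.card ≤ _ := (Finset.card_image_le (f := c)).trans (Finset.card_union_le _ _)
    have := hcard u (Sym2.mem_mk_left u v)
    have := hcard v (Sym2.mem_mk_right u v)
    rw [Finset.card_range]
    omega
  obtain ⟨k, hk, hkB⟩ := Finset.exists_mem_notMem_of_card_lt_card hB
  refine ⟨k, Finset.mem_range.1 hk, fun f hf x hx hxf hfk => hkB ?_⟩
  have hfx : f ∈ (G.incidenceFinset x).erase s(u, v) :=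
    Finset.mem_erase.2 ⟨fun h => huvF (h ▸ hf), (G.mem_incidenceFinset x f).2 ⟨hF hf, hxf⟩⟩
  refine Finset.mem_image.2 ⟨f, ?_, hfk⟩
  rcases Sym2.mem_iff.1 hx with rfl | rfl
  exacts [Finset.mem_union_left _ hfx, Finset.mem_union_right _ hfx]

lemma exists_isPColoring_isMatchingSet (hdeg : ∀ v, natDeg G v ≤ Δ) (hK : 2 * Δ ≤ K + 1) :
    ∃ c, IsPColoring G IsMatchingSet c K := by
  classical
  suffices h : ∀ F : Finset (Sym2 V), ↑F ⊆ G.edgeSet → ∃ c : Sym2 V → ℕ, (∀ e ∈ F, c e < K) ∧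
      ∀ e ∈ F, ∀ f ∈ F, e ≠ f → ∀ x ∈ e, x ∈ f → c e ≠ c f by
    obtain ⟨c, hlt, hne⟩ := h G.edgeFinset (by simp)
    refine ⟨c, fun e he => hlt e (mem_edgeFinset.2 he), fun i => ⟨fun e he => he.1, ?_⟩⟩
    rintro e ⟨he, rfl⟩ f ⟨hf, hfe⟩ hef x hxe hxf
    exact hne e (mem_edgeFinset.2 he) f (mem_edgeFinset.2 hf) hef x hxe hxf hfe.symm
  intro F
  induction F using Finset.induction_on with
  | empty => exact fun _ => ⟨fun _ => 0, by simp, by simp⟩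
  | insert a F haF ih =>
    intro hF
    obtain ⟨c, hlt, hne⟩ := ih ((Finset.coe_subset.2 (Finset.subset_insert a F)).trans hF)
    induction a using Sym2.ind with
    | h u v =>
      obtain ⟨k, hkK, hk⟩ :=
        exists_lt_forall_ne_of_adj hdeg hK
          ((Finset.coe_subset.2 (Finset.subset_insert _ F)).trans hF)
          (hF (Finset.mem_insert_self _ F)) haF c
      have hupd : ∀ f ∈ F, update c s(u, v) k f = c f := fun f hf =>
        update_of_ne (fun h : f = s(u, v) => haF (h ▸ hf)) _ _
      refine ⟨update c s(u, v) k, fun e he => ?_, fun e he f hf hef x hxe hxf => ?_⟩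
      · rcases Finset.mem_insert.1 he with rfl | he
        · rw [update_self]; exact hkK
        · rw [hupd e he]; exact hlt e he
      rcases Finset.mem_insert.1 he with rfl | he <;> rcases Finset.mem_insert.1 hf with rfl | hf
      · exact absurd rfl hef
      · rw [update_self, hupd f hf]; exact (hk f hf x hxe hxf).symm
      · rw [update_self, hupd e he]; exact hk e he x hxf hxe
      · rw [hupd e he, hupd f hf]; exact hne e he f hf hef x hxe hxf

end Greedy

section SemistrongBound

variable {G : SimpleGraph V} [Fintype V] {Δ : ℕ} {c : Sym2 V → ℕ}

lemma IsPColoring.isSemistrongMatching_of_minimal (hdeg : ∀ v, natDeg G v ≤ Δ)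
    (hc : IsPColoring G IsMatchingSet c (Δ ^ 2))
    (hmin : ∀ c', IsPColoring G IsMatchingSet c' (Δ ^ 2) →
      inducedWeight G (Δ ^ 2) c ≤ inducedWeight G (Δ ^ 2) c') (i : ℕ) :
    IsSemistrongMatching G (colorClass G c i) := by
  classical
  refine ⟨hc.2 i, ?_⟩
  by_contra! hbad
  obtain ⟨e, he, hnp⟩ := hbad
  induction e using Sym2.ind with
  | h u v =>
    obtain ⟨huv, rfl⟩ := he
    rw [mem_edgeSet] at huv
    have hiK : c s(u, v) < Δ ^ 2 := hc.1 _ huv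
    have hti : 4 ≤ edgeDegreeIn G u v (cov (colorClass G c (c s(u, v)))) :=
      four_le_edgeDegreeIn_of_not_pendantIn huv ⟨huv, rfl⟩ (hnp u (Sym2.mem_mk_left u v))
        (hnp v (Sym2.mem_mk_right u v))
    have htj : ∀ j < Δ ^ 2, 2 ≤ edgeDegreeIn G u v (cov (colorClass G c j)) := by
      intro j hj
      by_cases hu : u ∈ cov (colorClass G c j)
      · exact two_le_edgeDegreeIn_of_mem_cov (fun _ h => h.1) huv hu
      by_cases hv : v ∈ cov (colorClass G c j)
      · rw [edgeDegreeIn_comm]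
        exact two_le_edgeDegreeIn_of_mem_cov (fun _ h => h.1) huv.symm hv
      have hmove := inducedWeight_update hc huv hj hu hv
      have := hmin _ (hc.update_of_notMem_cov huv hj hu hv)
      omega
    have hlower : 2 * Δ ^ 2 + 2 ≤
        ∑ j ∈ Finset.range (Δ ^ 2), edgeDegreeIn G u v (cov (colorClass G c j)) := by
      have hrest := Finset.card_nsmul_le_sum ((Finset.range (Δ ^ 2)).erase (c s(u, v)))
        (fun j => edgeDegreeIn G u v (cov (colorClass G c j))) 2
        fun j hj => htj j (Finset.mem_range.1 (Finset.mem_of_mem_erase hj))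
      rw [Finset.card_erase_of_mem (Finset.mem_range.2 hiK), Finset.card_range,
        smul_eq_mul] at hrest
      rw [← Finset.add_sum_erase _ _ (Finset.mem_range.2 hiK)]
      omega
    have hupper := sum_edgeDegreeIn_cov_colorClass_le hdeg c (Δ ^ 2) u v
    omega

theorem exists_isPColoring_isSemistrongMatching (hdeg : ∀ v, natDeg G v ≤ Δ) :
    ∃ c, IsPColoring G IsSemistrongMatching c (Δ ^ 2) := by
  obtain ⟨c₀, hc₀⟩ := exists_isPColoring_isMatchingSet hdeg (K := Δ ^ 2) (by nlinarith)
  obtain ⟨c, hc, hmin⟩ := (measure (inducedWeight G (Δ ^ 2))).wf.has_min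
    {c | IsPColoring G IsMatchingSet c (Δ ^ 2)} ⟨c₀, hc₀⟩
  exact ⟨c, hc.1, hc.isSemistrongMatching_of_minimal hdeg fun c' hc' => not_lt.1 (hmin c' hc')⟩

theorem ssIndex_le_sq_of_forall_natDeg_le (hdeg : ∀ v, natDeg G v ≤ Δ) : ssIndex G ≤ Δ ^ 2 :=
  Nat.sInf_le (exists_isPColoring_isSemistrongMatching hdeg)

end SemistrongBound

section LowerBound

variable {G : SimpleGraph V} {M : Set (Sym2 V)}

/-- `hadj` holds for two disjoint edges on a common 4-cycle. -/
lemma IsSemistrongMatching.eq_of_forall_exists_adj (hM : IsSemistrongMatching G M)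
    {e f : Sym2 V} (he : e ∈ M) (hf : f ∈ M) (hadj : ∀ x ∈ e, ∃ z ∈ f, G.Adj x z) : e = f := by
  by_contra hef
  obtain ⟨x, hxe, -, y, -, huniq⟩ := hM.2 e he
  obtain ⟨x', rfl⟩ := Sym2.mem_iff_exists.1 hxe
  obtain ⟨z, hzf, hxz⟩ := hadj x hxe
  have hx'y := huniq x' ⟨⟨_, he, Sym2.mem_mk_right x x'⟩, hM.1.1 he⟩
  have hzy := huniq z ⟨⟨f, hf, hzf⟩, hxz⟩
  exact hM.1.2 _ he f hf hef x' (Sym2.mem_mk_right x x') (hx'y.trans hzy.symm ▸ hzf)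

lemma encard_edgeSet_le_of_isPColoring {P : SimpleGraph V → Set (Sym2 V) → Prop}
    (hP : ∀ M, P G M → M.Subsingleton) {c : Sym2 V → ℕ} {k : ℕ} (hc : IsPColoring G P c k) :
    G.edgeSet.encard ≤ k := by
  have hmaps : Set.MapsTo c G.edgeSet (Finset.range k : Set ℕ) := fun e he =>
    Finset.mem_coe.2 (Finset.mem_range.2 (hc.1 e he))
  have hinj : Set.InjOn c G.edgeSet := fun e he f hf hef =>
    hP _ (hc.2 (c e)) ⟨he, rfl⟩ ⟨hf, hef.symm⟩
  refine (Set.encard_le_encard_of_injOn hmaps hinj).trans_eq ?_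
  rw [Set.encard_coe_eq_coe_finsetCard, Finset.card_range]

variable {α β : Type*}

lemma IsSemistrongMatching.subsingleton_of_completeBipartiteGraph
    {M : Set (Sym2 (α ⊕ β))} (hM : IsSemistrongMatching (completeBipartiteGraph α β) M) :
    M.Subsingleton := by
  intro e he f hf
  refine hM.eq_of_forall_exists_adj he hf ?_
  obtain ⟨⟨a, b⟩, rfl⟩ := edgeSet_completeBipartiteGraph ▸ hM.1.1 he
  obtain ⟨⟨a', b'⟩, rfl⟩ := edgeSet_completeBipartiteGraph ▸ hM.1.1 hf
  intro x hx
  rcases Sym2.mem_iff.1 hx with rfl | rfl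
  · exact ⟨.inr b', Sym2.mem_mk_right _ _, by simp⟩
  · exact ⟨.inl a', Sym2.mem_mk_left _ _, by simp⟩

lemma natDeg_completeBipartiteGraph_inl (a : α) :
    natDeg (completeBipartiteGraph α β) (.inl a) = Nat.card β := by
  have hN : (completeBipartiteGraph α β).neighborSet (.inl a) = Set.range Sum.inr := by
    ext (y | y) <;> simp
  rw [natDeg, hN, Set.ncard_range_of_injective Sum.inr_injective]

lemma natDeg_completeBipartiteGraph_inr (b : β) :
    natDeg (completeBipartiteGraph α β) (.inr b) = Nat.card α := by
  have hN : (completeBipartiteGraph α β).neighborSet (.inr b) = Set.range Sum.inl := by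
    ext (y | y) <;> simp
  rw [natDeg, hN, Set.ncard_range_of_injective Sum.inl_injective]

end LowerBound

theorem ssIndex_completeBipartiteGraph_fin (n : ℕ) :
    ssIndex (completeBipartiteGraph (Fin n) (Fin n)) = n ^ 2 := by
  have hdeg : ∀ x, natDeg (completeBipartiteGraph (Fin n) (Fin n)) x ≤ n := by
    rintro (a | b) <;>
      simp [natDeg_completeBipartiteGraph_inl, natDeg_completeBipartiteGraph_inr]
  have hcard : (completeBipartiteGraph (Fin n) (Fin n)).edgeSet.encard = (n ^ 2 : ℕ) := by
    simp [encard_edgeSet_completeBipartiteGraph, sq]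
  refine le_antisymm (ssIndex_le_sq_of_forall_natDeg_le hdeg)
    (le_csInf ⟨_, exists_isPColoring_isSemistrongMatching hdeg⟩ fun k ⟨c, hc⟩ => ?_)
  have := hcard ▸ encard_edgeSet_le_of_isPColoring
    (fun _ hM => IsSemistrongMatching.subsingleton_of_completeBipartiteGraph hM) hc
  exact_mod_cast this

theorem ssIndex_completeBipartite_and_upper_bound_general (Δ : ℕ) :
    ssIndex (completeBipartiteGraph (Fin Δ) (Fin Δ)) = Δ ^ 2 ∧
    ∀ (V : Type) [Fintype V] (G : SimpleGraph V),
      (∀ v, natDeg G v ≤ Δ) → (∃ v, natDeg G v = Δ) → ssIndex G ≤ Δ ^ 2 :=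
  ⟨ssIndex_completeBipartiteGraph_fin Δ,
    fun _ _ _ hdeg _ => ssIndex_le_sq_of_forall_natDeg_le hdeg⟩

/-- `χ'_ss(K_{Δ,Δ}) = Δ²` for `Δ ≥ 1`, and every graph with maximum degree `Δ`
satisfies `χ'_ss(G) ≤ Δ²`. -/
theorem ssIndex_completeBipartite_and_upper_bound (Δ : ℕ) (hΔ : 1 ≤ Δ) :
    ssIndex (completeBipartiteGraph (Fin Δ) (Fin Δ)) = Δ ^ 2 ∧
    ∀ (V : Type) [Fintype V] (G : SimpleGraph V),
      (∀ v, natDeg G v ≤ Δ) → (∃ v, natDeg G v = Δ) → ssIndex G ≤ Δ ^ 2 :=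
  ssIndex_completeBipartite_and_upper_bound_general Δ

end SSE
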